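/- Let G and H be non-bipartite graphs with χ(G) = χ(H) − j for some j ≥ 0, and suppose there is a homomorphism from G to H. Then for every integer i with i + j ≥ −χ(G) + 3, the (i+j)-th power thickness of G is at least the i-th power thickness of H. -/

import Mathlib

structure PGraph where
  V : Type
  Adj : V → V → Prop
  symm : ∀ u v, Adj u v → Adj v u

namespace PGraph

/-- There is a walk of length exactly `n` from `u` to `v`. -/
def walkLen (G : PGraph) : ℕ → G.V → G.V → Prop
  | 0, u, v => u = v
  | n+1, u, v => ∃ w, G.Adj u w ∧ G.walkLen n w v

theorem walkLen_concat (G : PGraph) : ∀ (n : ℕ) (u v w : G.V),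
    G.walkLen n u v → G.Adj v w → G.walkLen (n+1) u w := by
  intro n
  induction n with
  | zero =>
      intro u v w h hadj
      cases h
      exact ⟨w, hadj, rfl⟩
  | succ n ih =>
      rintro u v w ⟨x, hux, hxv⟩ hadj
      exact ⟨x, hux, ih x v w hxv hadj⟩

theorem walkLen_symm (G : PGraph) : ∀ (n : ℕ) (u v : G.V),
    G.walkLen n u v → G.walkLen n v u := by
  intro n
  induction n with
  | zero => intro u v h; exact h.symm
  | succ n ih =>
      rintro u v ⟨w, huw, hwv⟩
      exact G.walkLen_concat n v w u (ih w v hwv) (G.symm u w huw)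

/-- The `k`-th power of a graph: same vertices, adjacency = existence of a
walk of length exactly `k` (loops allowed). -/
def pow (G : PGraph) (k : ℕ) : PGraph where
  V := G.V
  Adj u v := G.walkLen k u v
  symm := G.walkLen_symm k

/-- Existence of a graph homomorphism. -/
def homTo (G H : PGraph) : Prop :=
  ∃ f : G.V → H.V, ∀ u v, G.Adj u v → H.Adj (f u) (f v)

/-- The `(2s+1)`-subdivision `S_{2s+1}(G)`: every edge is replaced by a path
of length `2s+1`.  Following the paper's notation, the ordered pair `(u,v)`
(with `u ~ v`) carries the `s` inner vertices `(uv)_1, …, (uv)_s`. -/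
def subdiv (G : PGraph) (s : ℕ) : PGraph where
  V := G.V ⊕ ({p : G.V × G.V // G.Adj p.1 p.2} × Fin s)
  Adj x y :=
    match x, y with
    | Sum.inl u, Sum.inl v => s = 0 ∧ G.Adj u v
    | Sum.inl u, Sum.inr (e, k) => u = e.1.2 ∧ (k : ℕ) = s - 1
    | Sum.inr (e, k), Sum.inl u => u = e.1.2 ∧ (k : ℕ) = s - 1
    | Sum.inr (e, k), Sum.inr (e', l) =>
        e'.1.1 = e.1.2 ∧ e'.1.2 = e.1.1 ∧
        ((k : ℕ) + (l : ℕ) + 2 = s ∨ (k : ℕ) + (l : ℕ) + 2 = s + 1)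
  symm := by
    rintro (u | ⟨e, k⟩) (v | ⟨e', l⟩) h
    · exact ⟨h.1, G.symm _ _ h.2⟩
    · exact h
    · exact h
    · obtain ⟨h1, h2, h3⟩ := h
      exact ⟨h2.symm, h1.symm, by omega⟩

/-- `q < og(G)`: the rational `q` is smaller than the odd girth of `G`
(the length of a shortest odd closed walk; vacuously true if `G` is bipartite). -/
def ltOddGirth (G : PGraph) (q : ℚ) : Prop :=
  ∀ n : ℕ, Odd n → (∃ v, G.walkLen n v v) → q < (n : ℚ)

/-- A graph is non-bipartite iff it contains an odd closed walk. -/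
def Nonbipartite (G : PGraph) : Prop :=
  ∃ (n : ℕ) (v : G.V), Odd n ∧ G.walkLen n v v

/-- The odd girth, as an extended natural number (`⊤` for bipartite graphs). -/
noncomputable def oddGirth (G : PGraph) : ℕ∞ :=
  sInf {N : ℕ∞ | ∃ n : ℕ, N = (n : ℕ∞) ∧ Odd n ∧ ∃ v, G.walkLen n v v}

/-- The complete graph on `m` vertices. -/
def completeGraph (m : ℕ) : PGraph :=
  ⟨Fin m, fun u v => u ≠ v, fun _ _ h => h.symm⟩

/-- The chromatic number: least `m` such that `G` maps homomorphically to `K_m`. -/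
noncomputable def chromatic (G : PGraph) : ℕ :=
  sInf {m : ℕ | G.homTo (completeGraph m)}

/-- The `i`-th power thickness
`θ_i(G) = sup { (2r+1)/(2s+1) | χ(G^{(2r+1)/(2s+1)}) ≤ χ(G)+i, (2r+1)/(2s+1) < og(G) }`. -/
noncomputable def powerThickness (G : PGraph) (i : ℤ) : ℝ :=
  sSup {x : ℝ | ∃ r s : ℕ, x = (2*(r:ℝ)+1)/(2*(s:ℝ)+1) ∧
    ((((G.subdiv s).pow (2*r+1)).chromatic : ℤ) ≤ (G.chromatic : ℤ) + i) ∧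
    G.ltOddGirth ((2*(r:ℚ)+1)/(2*(s:ℚ)+1))}

/-- The graph `H^{-1/(2r+1)}`. -/
def negPow (H : PGraph) (r : ℕ) : PGraph where
  V := {A : Fin (r+1) → Set H.V //
        (∃ v, A 0 = {v}) ∧
        ∀ i : Fin (r+1), (A i).Nonempty ∧ A i ⊆ {u | ∃ v ∈ A 0, H.walkLen i v u}}
  Adj A B :=
    (∀ i j : Fin (r+1), (j : ℕ) = (i : ℕ) + 1 → A.1 i ⊆ B.1 j ∧ B.1 i ⊆ A.1 j) ∧
    ∀ j : Fin (r+1), ∀ a ∈ A.1 j, ∀ b ∈ B.1 j, H.Adj a b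
  symm := by
    rintro A B ⟨h1, h2⟩
    exact ⟨fun i j hij => ⟨(h1 i j hij).2, (h1 i j hij).1⟩,
           fun j b hb a ha => H.symm _ _ (h2 j a ha b hb)⟩

/-- The circular complete graph `K_{n/d}`. -/
def circGraph (n d : ℕ) : PGraph where
  V := Fin n
  Adj u v := (d : ℤ) ≤ |(u : ℤ) - (v : ℤ)| ∧ |(u : ℤ) - (v : ℤ)| ≤ (n : ℤ) - d
  symm := by
    intro u v h
    rwa [abs_sub_comm]

/-- The circular chromatic number, as a real number. -/
noncomputable def circChrom (G : PGraph) : ℝ :=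
  sInf {x : ℝ | ∃ n d : ℕ, 0 < d ∧ 2 * d ≤ n ∧ Nat.gcd n d = 1 ∧
    x = (n : ℝ) / (d : ℝ) ∧ G.homTo (circGraph n d)}

/-- The cycle on `m` vertices. -/
def cycleGraph (m : ℕ) : PGraph :=
  ⟨ZMod m, fun i j => i = j + 1 ∨ j = i + 1, fun _ _ h => h.symm⟩

/-- Graph isomorphism. -/
def Isom (G H : PGraph) : Prop :=
  ∃ f : G.V ≃ H.V, ∀ u v, G.Adj u v ↔ H.Adj (f u) (f v)

/-- The helical graph `H(m,n,k)`. -/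
def helical (m n k : ℕ) : PGraph where
  V := {A : Fin k → Set (Fin m) //
        (∀ h : 0 < k, (A ⟨0, h⟩).ncard = n) ∧
        (∀ i, n ≤ (A i).ncard) ∧
        (∀ i : Fin k, ∀ h : (i : ℕ) + 1 < k, A i ∩ A ⟨(i : ℕ) + 1, h⟩ = ∅) ∧
        (∀ i : Fin k, ∀ h : (i : ℕ) + 2 < k, A i ⊆ A ⟨(i : ℕ) + 2, h⟩)}
  Adj A B :=
    (∀ i, A.1 i ∩ B.1 i = ∅) ∧
    (∀ i : Fin k, ∀ h : (i : ℕ) + 1 < k,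
      A.1 i ⊆ B.1 ⟨(i : ℕ) + 1, h⟩ ∧ B.1 i ⊆ A.1 ⟨(i : ℕ) + 1, h⟩)
  symm := by
    rintro A B ⟨h1, h2⟩
    refine ⟨fun i => ?_, fun i h => ⟨(h2 i h).2, (h2 i h).1⟩⟩
    rw [Set.inter_comm]
    exact h1 i

/-- A graph with chromatic number `k` is colorful if every proper `k`-coloring
admits a (nonempty) induced subgraph all of whose vertices see all `k` colors in
their closed neighborhood. -/
def Colorful (G : PGraph) : Prop :=
  ∀ c : G.V → Fin G.chromatic, (∀ u v, G.Adj u v → c u ≠ c v) →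
    ∃ S : Set G.V, S.Nonempty ∧
      ∀ v ∈ S, ∀ col : Fin G.chromatic,
        ∃ u ∈ S, (u = v ∨ G.Adj v u) ∧ c u = col

end PGraph

/-!
A homomorphism `G → H` induces homomorphisms `S_{2s+1}(G) → S_{2s+1}(H)` and
`G^{(2r+1)/(2s+1)} → H^{(2r+1)/(2s+1)}`, and `G` inherits every odd-girth bound of `H`. Hence every
ratio admissible for `θ_i(H)` is admissible for `θ_{i+j}(G)`, since
`χ(G^q) ≤ χ(H^q) ≤ χ(H) + i = χ(G) + i + j`. The only obstacle is that a graph with a loop has no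
proper colouring, so its chromatic number is the junk value `0`. If `H^q` has a loop then, below
the odd girth, `H` has one, so `χ(H) = χ(G) = 0`; then the finite graph `G` has a loop, and so
does `G^q`.
-/

namespace PGraph

variable {G H : PGraph}

theorem walkLen_append : ∀ {m n : ℕ} {u v w : G.V},
    G.walkLen m u v → G.walkLen n v w → G.walkLen (m + n) u w
  | 0, n, u, v, w, huv, hvw => by
      obtain rfl : u = v := huv
      simpa using hvw
  | m + 1, n, u, v, w, ⟨x, hux, hxv⟩, hvw => by
      rw [Nat.add_right_comm]
      exact ⟨x, hux, walkLen_append hxv hvw⟩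

theorem walkLen_of_adj_self {x : G.V} (hx : G.Adj x x) : ∀ n, G.walkLen n x x
  | 0 => rfl
  | n + 1 => ⟨x, hx, walkLen_of_adj_self hx n⟩

theorem walkLen_map {f : G.V → H.V} (hf : ∀ u v, G.Adj u v → H.Adj (f u) (f v)) :
    ∀ {n : ℕ} {u v : G.V}, G.walkLen n u v → H.walkLen n (f u) (f v)
  | 0, _, _, huv => congrArg f huv
  | _ + 1, _, _, ⟨w, huw, hwv⟩ => ⟨f w, hf _ _ huw, walkLen_map hf hwv⟩

instance [Finite G.V] (k : ℕ) : Finite (G.pow k).V := ‹Finite G.V›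

instance [Finite G.V] (s : ℕ) : Finite (G.subdiv s).V :=
  inferInstanceAs (Finite (G.V ⊕ ({p : G.V × G.V // G.Adj p.1 p.2} × Fin s)))

theorem pow_adj_self {x : G.V} (hx : G.Adj x x) (k : ℕ) : (G.pow k).Adj x x :=
  walkLen_of_adj_self hx k

theorem exists_subdiv_adj_self {a : G.V} (ha : G.Adj a a) :
    ∀ s, ∃ x, (G.subdiv s).Adj x x
  | 0 => ⟨Sum.inl a, rfl, ha⟩
  | t + 1 => ⟨Sum.inr (⟨(a, a), ha⟩, ⟨t / 2, by omega⟩), rfl, rfl, by dsimp only; omega⟩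

namespace homTo

theorem trans {K : PGraph} : G.homTo H → H.homTo K → G.homTo K
  | ⟨f, hf⟩, ⟨g, hg⟩ => ⟨g ∘ f, fun u v huv => hg _ _ (hf u v huv)⟩

theorem pow (h : G.homTo H) (k : ℕ) : (G.pow k).homTo (H.pow k) :=
  let ⟨f, hf⟩ := h
  ⟨f, fun _ _ => walkLen_map hf⟩

theorem subdiv (h : G.homTo H) (s : ℕ) : (G.subdiv s).homTo (H.subdiv s) := by
  obtain ⟨f, hf⟩ := h
  refine ⟨Sum.map f fun ek => (⟨(f ek.1.1.1, f ek.1.1.2), hf _ _ ek.1.2⟩, ek.2), ?_⟩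
  rintro (u | ⟨e, k⟩) (v | ⟨e', l⟩) h
  · exact ⟨h.1, hf _ _ h.2⟩
  · exact ⟨congrArg f h.1, h.2⟩
  · exact ⟨congrArg f h.1, h.2⟩
  · exact ⟨congrArg f h.1, congrArg f h.2.1, h.2.2⟩

end homTo

theorem chromatic_le_of_homTo (h : G.homTo H) (hH : ∃ m, H.homTo (completeGraph m)) :
    G.chromatic ≤ H.chromatic :=
  Nat.sInf_le (h.trans (Nat.sInf_mem hH))

theorem exists_homTo_completeGraph [Finite G.V] (h : ∀ x, ¬ G.Adj x x) :
    ∃ m, G.homTo (completeGraph m) := by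
  obtain ⟨m, ⟨e⟩⟩ := Finite.exists_equiv_fin G.V
  exact ⟨m, e, fun u v huv heq => h u (e.injective heq ▸ huv)⟩

theorem chromatic_eq_zero_of_adj_self {x : G.V} (hx : G.Adj x x) : G.chromatic = 0 := by
  refine Nat.sInf_eq_zero.mpr (Or.inr (Set.eq_empty_of_forall_notMem ?_))
  rintro m ⟨f, hf⟩
  exact hf x x hx rfl

theorem exists_adj_self_of_chromatic_eq_zero [Finite G.V] [Nonempty G.V]
    (h : G.chromatic = 0) : ∃ x, G.Adj x x := by
  by_contra! hloop
  obtain ⟨f, -⟩ : G.homTo (completeGraph 0) :=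
    h ▸ Nat.sInf_mem (exists_homTo_completeGraph hloop)
  exact (f (Classical.arbitrary G.V)).elim0

section

variable {s : ℕ}

/-- In `S_{2s+1}(H)` the inner vertex `(uv)_k` lies on the path from `u` to `v` at distance
`2k+2` from `u` and `2s-2k-1` from `v`. -/
inductive EdgeOffset (H : PGraph) (s : ℕ) : (H.subdiv s).V → H.V → ℕ → Prop
  | branch (u : H.V) : EdgeOffset H s (Sum.inl u) u 0
  | fst (e : {p : H.V × H.V // H.Adj p.1 p.2}) (k : Fin s) :
      EdgeOffset H s (Sum.inr (e, k)) e.1.1 (2 * k + 2)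
  | snd (e : {p : H.V × H.V // H.Adj p.1 p.2}) (k : Fin s) :
      EdgeOffset H s (Sum.inr (e, k)) e.1.2 (2 * s - 2 * k - 1)

theorem EdgeOffset.exists_of_adj {x y : (H.subdiv s).V} {u : H.V} {d : ℕ}
    (hu : EdgeOffset H s x u d) (hxy : (H.subdiv s).Adj x y) :
    ∃ u' d', EdgeOffset H s y u' d' ∧
      ((u' = u ∧ d' ≤ d + 1 ∧ d' % 2 = (d + 1) % 2) ∨
        (H.Adj u u' ∧ d' + (2 * s + 1) ≤ d + 1 ∧ d' % 2 = d % 2)) := by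
  rcases hu with u | ⟨e, k⟩ | ⟨e, k⟩ <;> rcases y with v | ⟨e', l⟩
  · obtain ⟨rfl, huv⟩ := hxy
    exact ⟨v, 0, .branch v, .inr ⟨huv, le_rfl, rfl⟩⟩
  · obtain ⟨rfl, hl⟩ := hxy
    exact ⟨_, _, .snd e' l, .inl ⟨rfl, by omega, by omega⟩⟩
  · obtain ⟨rfl, hk⟩ := hxy
    exact ⟨_, 0, .branch _, .inr ⟨e.2, by omega, by omega⟩⟩
  · obtain ⟨h₁, h₂, hkl⟩ := hxy
    exact ⟨_, _, .snd e' l, .inl ⟨h₂, by omega, by omega⟩⟩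
  · obtain ⟨rfl, hk⟩ := hxy
    exact ⟨_, 0, .branch _, .inl ⟨rfl, by omega, by omega⟩⟩
  · obtain ⟨h₁, h₂, hkl⟩ := hxy
    exact ⟨_, _, .fst e' l, .inl ⟨h₁, by omega, by omega⟩⟩

theorem exists_walkLen_of_subdiv_walkLen {L : ℕ} {x : (H.subdiv s).V} {v : H.V}
    (hw : (H.subdiv s).walkLen L x (Sum.inl v)) {u : H.V} {d : ℕ}
    (hu : EdgeOffset H s x u d) :
    ∃ ℓ, H.walkLen ℓ u v ∧ (2 * s + 1) * ℓ ≤ L + d ∧ ℓ % 2 = (L + d) % 2 := by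
  induction L generalizing x u d with
  | zero =>
      cases (hw : x = Sum.inl v)
      cases hu
      exact ⟨0, rfl, le_rfl, rfl⟩
  | succ L ih =>
      obtain ⟨y, hxy, hyv⟩ := hw
      obtain ⟨u', d', hu', hstep⟩ := hu.exists_of_adj hxy
      obtain ⟨ℓ, hℓ, hlen, hpar⟩ := ih hyv hu'
      rcases hstep with ⟨rfl, hd, hdpar⟩ | ⟨huu', hd, hdpar⟩
      · exact ⟨ℓ, hℓ, by omega, by omega⟩
      · refine ⟨ℓ + 1, ⟨u', huu', hℓ⟩, ?_, by omega⟩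
        rw [Nat.mul_succ]
        omega

theorem subdiv_walkLen_from_inr {L : ℕ} {e : {p : H.V × H.V // H.Adj p.1 p.2}} {k : Fin s}
    {y : (H.subdiv s).V} (hw : (H.subdiv s).walkLen L (Sum.inr (e, k)) y) :
    (∃ w t₁ t₂, t₁ + t₂ = L ∧ (H.subdiv s).walkLen t₁ (Sum.inr (e, k)) (Sum.inl w) ∧
        (H.subdiv s).walkLen t₂ (Sum.inl w) y) ∨
      ∃ e' l, y = Sum.inr (e', l) ∧
        ((Even L ∧ e'.1.1 = e.1.1) ∨ (Odd L ∧ e'.1.1 = e.1.2)) := by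
  induction L generalizing e k with
  | zero => exact .inr ⟨e, k, (hw : _ = y).symm, .inl ⟨.zero, rfl⟩⟩
  | succ L ih =>
      obtain ⟨z, hz, hzy⟩ := hw
      rcases z with w | ⟨e₁, m⟩
      · exact .inl ⟨w, 1, L, by omega, ⟨_, hz, rfl⟩, hzy⟩
      rcases ih hzy with ⟨w, t₁, t₂, ht, h₁w, hw₂⟩ | ⟨e', l, rfl, hpar⟩
      · exact .inl ⟨w, t₁ + 1, t₂, by omega, ⟨_, hz, h₁w⟩, hw₂⟩
      obtain ⟨h₁, h₂, -⟩ := hz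
      refine .inr ⟨e', l, rfl, ?_⟩
      rcases hpar with ⟨hL, he'⟩ | ⟨hL, he'⟩
      · exact .inr ⟨hL.add_one, he'.trans h₁⟩
      · exact .inl ⟨hL.add_one, he'.trans h₂⟩

end

theorem ltOddGirth.of_homTo {q : ℚ} (hH : H.ltOddGirth q) (h : G.homTo H) :
    G.ltOddGirth q := by
  obtain ⟨f, hf⟩ := h
  rintro n hn ⟨v, hv⟩
  exact hH n hn ⟨f v, walkLen_map hf hv⟩

theorem ltOddGirth.lt_mul {r s ℓ : ℕ} (hH : H.ltOddGirth ((2 * r + 1) / (2 * s + 1)))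
    (hℓ : Odd ℓ) {v : H.V} (hv : H.walkLen ℓ v v) : 2 * r + 1 < (2 * s + 1) * ℓ := by
  have h := hH ℓ hℓ ⟨v, hv⟩
  rw [div_lt_iff₀ (by positivity)] at h
  have h' : ((2 * r + 1 : ℕ) : ℚ) < ((2 * s + 1) * ℓ : ℕ) := by push_cast; linarith
  exact_mod_cast h'

/-- Below the odd girth, an odd closed walk of `S_{2s+1}(H)` of length `2r+1` cannot pass
through a branch vertex, so it runs inside a single subdivided edge, which must be a loop. -/
theorem exists_adj_self_of_subdiv_walkLen {r s : ℕ}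
    (hH : H.ltOddGirth ((2 * r + 1) / (2 * s + 1))) {x : (H.subdiv s).V}
    (hx : (H.subdiv s).walkLen (2 * r + 1) x x) : ∃ a, H.Adj a a := by
  have no_branch : ∀ w, ¬ (H.subdiv s).walkLen (2 * r + 1) (Sum.inl w) (Sum.inl w) := by
    intro w hw
    obtain ⟨ℓ, hℓ, hlen, hpar⟩ := exists_walkLen_of_subdiv_walkLen hw (.branch w)
    have := hH.lt_mul (Nat.odd_iff.mpr (by omega)) hℓ
    omega
  rcases x with w | ⟨e, k⟩
  · exact (no_branch w hx).elim
  rcases subdiv_walkLen_from_inr hx with ⟨w, t₁, t₂, ht, hw₁, hw₂⟩ | ⟨e', l, he', hpar⟩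
  · exact (no_branch w (ht ▸ add_comm t₂ t₁ ▸ walkLen_append hw₂ hw₁)).elim
  obtain ⟨rfl, -⟩ := Prod.ext_iff.mp (Sum.inr.inj he')
  rcases hpar with ⟨hL, -⟩ | ⟨-, he⟩
  · exact absurd hL (Nat.not_even_iff_odd.mpr (odd_two_mul_add_one r))
  · exact ⟨e.1.1, he ▸ e.2⟩

theorem chromatic_pow_subdiv_le [Finite G.V] [Finite H.V] [Nonempty G.V] (hom : G.homTo H)
    {j : ℕ} (hchi : (G.chromatic : ℤ) = H.chromatic - j) {r s : ℕ}
    (hH : H.ltOddGirth ((2 * r + 1) / (2 * s + 1))) {i : ℤ}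
    (hc : (((H.subdiv s).pow (2 * r + 1)).chromatic : ℤ) ≤ H.chromatic + i) :
    (((G.subdiv s).pow (2 * r + 1)).chromatic : ℤ) ≤ G.chromatic + (i + j) := by
  by_cases hloop : ∃ x, ((H.subdiv s).pow (2 * r + 1)).Adj x x
  · obtain ⟨x, hx⟩ := hloop
    obtain ⟨a, ha⟩ := exists_adj_self_of_subdiv_walkLen hH hx
    have hG : G.chromatic = 0 := by
      have := chromatic_eq_zero_of_adj_self ha
      omega
    obtain ⟨b, hb⟩ := exists_adj_self_of_chromatic_eq_zero hG
    obtain ⟨y, hy⟩ := exists_subdiv_adj_self hb s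
    rw [chromatic_eq_zero_of_adj_self hx] at hc
    rw [chromatic_eq_zero_of_adj_self (pow_adj_self hy _)]
    omega
  · have := chromatic_le_of_homTo ((hom.subdiv s).pow _)
      (exists_homTo_completeGraph (not_exists.mp hloop))
    omega

def powerThicknessSet (G : PGraph) (i : ℤ) : Set ℝ :=
  {x : ℝ | ∃ r s : ℕ, x = (2 * (r : ℝ) + 1) / (2 * (s : ℝ) + 1) ∧
    ((((G.subdiv s).pow (2 * r + 1)).chromatic : ℤ) ≤ G.chromatic + i) ∧
    G.ltOddGirth ((2 * (r : ℚ) + 1) / (2 * (s : ℚ) + 1))}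

theorem powerThickness_eq_sSup (G : PGraph) (i : ℤ) :
    G.powerThickness i = sSup (G.powerThicknessSet i) :=
  rfl

theorem nonneg_of_mem_powerThicknessSet {i : ℤ} {x : ℝ} (hx : x ∈ G.powerThicknessSet i) :
    0 ≤ x := by
  obtain ⟨r, s, rfl, -⟩ := hx
  positivity

theorem bddAbove_powerThicknessSet (hG : G.Nonbipartite) (i : ℤ) :
    BddAbove (G.powerThicknessSet i) := by
  obtain ⟨n, v, hn, hv⟩ := hG
  refine ⟨n, ?_⟩
  rintro x ⟨r, s, rfl, -, hog⟩
  have h := (Rat.cast_lt (K := ℝ)).mpr (hog n hn ⟨v, hv⟩)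
  push_cast at h
  exact h.le

theorem powerThicknessSet_subset [Finite G.V] [Finite H.V] [Nonempty G.V] (hom : G.homTo H)
    {j : ℕ} (hchi : (G.chromatic : ℤ) = H.chromatic - j) (i : ℤ) :
    H.powerThicknessSet i ⊆ G.powerThicknessSet (i + j) := by
  rintro x ⟨r, s, rfl, hc, hog⟩
  exact ⟨r, s, rfl, chromatic_pow_subdiv_le hom hchi hog hc, hog.of_homTo hom⟩

end PGraph

open PGraph

theorem powerThickness_mono_general (G H : PGraph) (hG : G.Nonbipartite)
    (hGf : Finite G.V) (hHf : Finite H.V) (j : ℕ)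
    (hchi : (G.chromatic : ℤ) = (H.chromatic : ℤ) - (j : ℤ))
    (hhom : G.homTo H) (i : ℤ) :
    G.powerThickness (i + j) ≥ H.powerThickness i := by
  have : Nonempty G.V := let ⟨_, v, _⟩ := hG; ⟨v⟩
  rw [ge_iff_le, powerThickness_eq_sSup, powerThickness_eq_sSup]
  refine Real.sSup_le (fun x hx => ?_) (Real.sSup_nonneg fun _ => nonneg_of_mem_powerThicknessSet)
  exact le_csSup (bddAbove_powerThicknessSet hG _) (powerThicknessSet_subset hhom hchi i hx)

/-- If `χ(G) = χ(H) - j` (`j ≥ 0`), `G → H`, and `i + j ≥ -χ(G)+3`,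
then `θ_{i+j}(G) ≥ θ_i(H)`. -/
theorem powerThickness_mono (G H : PGraph) (hG : G.Nonbipartite) (hH : H.Nonbipartite)
    (hGf : Finite G.V) (hHf : Finite H.V) (j : ℕ)
    (hchi : (G.chromatic : ℤ) = (H.chromatic : ℤ) - (j : ℤ))
    (hhom : G.homTo H) (i : ℤ) (hi : i + (j : ℤ) ≥ -(G.chromatic : ℤ) + 3) :
    G.powerThickness (i + j) ≥ H.powerThickness i :=
  powerThickness_mono_general G H hG hGf hHf j hchi hhom i
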